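/- arXiv:0802.4312 — 4 statements merged into one kernel-verified Lean document; each statement's English description precedes it below -/
import Mathlib

section
/- Lower semicontinuity of length under Hausdorff convergence: if Γ and Γ_n (n ∈ ℕ) are simple rectifiable curves in ℝⁿ with d_H(Γ_n, Γ) → 0, then H¹(Γ) ≤ liminf_n H¹(Γ_n). -/
/-!
At `μH¹`-almost every point of `Γ` the upper density `limsup μH¹(Γ ∩ B̄(x, r)) / 2r` is at most
`1` (a Besicovitch covering argument), so for every `η > 0` there are countably many disjoint
small closed balls `B̄(xᵢ, rᵢ)` centred on `Γ` with `μH¹ Γ ≤ (1 + η) ∑ 2rᵢ`. Once `Γₘ` is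
`ε`-close to `Γ`, it passes within `ε` of each centre and also near a point of `Γ` outside the
ball, so on either side of the point near the centre it crosses the ball radially: the image of
that subarc under `dist · xᵢ` covers `[ε, rᵢ]`, hence its part inside the ball has length at
least `rᵢ - ε`. Only a subarc ending inside the ball can fail to cross it, and each endpoint of
`Γₘ` lies in at most one of the disjoint balls, so `∑ 2(rᵢ - ε) ≤ μH¹ Γₘ + 2η` over any finite
subfamily. Letting `m → ∞`, then `ε → 0` and `η → 0` gives the claim.
-/

open Set Metric Filter MeasureTheory ENNReal

def IsSimpleRectifiableCurve {n : ℕ} (Γ : Set (EuclideanSpace ℝ (Fin n))) : Prop :=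
  (∃ γ : ℝ → EuclideanSpace ℝ (Fin n),
      ContinuousOn γ (Icc 0 1) ∧ InjOn γ (Icc 0 1) ∧ γ '' Icc 0 1 = Γ) ∧
  μH[1] Γ < ⊤

open Topology

variable {X : Type*}

def IsSimpleArc [TopologicalSpace X] (Γ : Set X) : Prop :=
  ∃ γ : ℝ → X, ContinuousOn γ (Icc 0 1) ∧ InjOn γ (Icc 0 1) ∧ γ '' Icc 0 1 = Γ

theorem IsSimpleArc.isCompact [TopologicalSpace X] {Γ : Set X} (hΓ : IsSimpleArc Γ) :
    IsCompact Γ := by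
  obtain ⟨γ, hc, -, rfl⟩ := hΓ
  exact isCompact_Icc.image_of_continuousOn hc

theorem IsSimpleArc.nonempty [TopologicalSpace X] {Γ : Set X} (hΓ : IsSimpleArc Γ) :
    Γ.Nonempty := by
  obtain ⟨γ, -, -, rfl⟩ := hΓ
  exact (nonempty_Icc.2 zero_le_one).image γ

variable [MetricSpace X]

theorem ediam_closedBall_le_two_mul_ofReal (x : X) (r : ℝ) :
    ediam (closedBall x r) ≤ 2 * ENNReal.ofReal r := by
  rcases lt_or_ge r 0 with hr | hr
  · simp [closedBall_eq_empty.2 hr]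
  · rw [← closedEBall_ofReal hr]
    exact ediam_closedEBall_le

variable [MeasurableSpace X] [BorelSpace X]

theorem IsPreconnected.ofReal_sub_dist_le_hausdorffMeasure_inter_closedBall {K : Set X}
    (hK : IsPreconnected K) {x y z : X} {r : ℝ} (hy : y ∈ K) (hz : z ∈ K) (hzx : r ≤ dist z x) :
    ENNReal.ofReal (r - dist y x) ≤ μH[1] (K ∩ closedBall x r) := by
  have hIcc : Icc (dist y x) r ⊆ (dist · x) '' (K ∩ closedBall x r) := by
    intro t ht
    obtain ⟨w, hwK, hwt⟩ := hK.intermediate_value hy hz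
      (continuous_id.dist continuous_const).continuousOn ⟨ht.1, ht.2.trans hzx⟩
    exact ⟨w, ⟨hwK, mem_closedBall.2 (hwt.trans_le ht.2)⟩, hwt⟩
  calc ENNReal.ofReal (r - dist y x) = μH[1] (Icc (dist y x) r) := by
        rw [Real.volume_Icc.symm, hausdorffMeasure_real]
    _ ≤ μH[1] ((dist · x) '' (K ∩ closedBall x r)) := measure_mono hIcc
    _ ≤ μH[1] (K ∩ closedBall x r) := by
        simpa using (LipschitzWith.dist_left x).hausdorffMeasure_image_le zero_le_one _

theorem two_mul_ofReal_sub_le_hausdorffMeasure_inter_closedBall {γ : ℝ → X}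
    (hc : ContinuousOn γ (Icc 0 1)) (hi : InjOn γ (Icc 0 1)) {x y z : X} {r ε : ℝ}
    (hy : y ∈ γ '' Icc 0 1) (hyx : dist y x ≤ ε) (hz : z ∈ γ '' Icc 0 1) (hzx : r ≤ dist z x) :
    2 * ENNReal.ofReal (r - ε) ≤ μH[1] (γ '' Icc 0 1 ∩ closedBall x r) +
      (ball x r).indicator (fun _ => ENNReal.ofReal (r - ε)) (γ 0) +
      (ball x r).indicator (fun _ => ENNReal.ofReal (r - ε)) (γ 1) := by
  have hball : ∀ {K : Set X} {v : X}, IsPreconnected K → y ∈ K → v ∈ K → r ≤ dist v x →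
      ENNReal.ofReal (r - ε) ≤ μH[1] (K ∩ closedBall x r) := fun hK hyK hvK hvx =>
    (ENNReal.ofReal_le_ofReal (by linarith)).trans
      (hK.ofReal_sub_dist_le_hausdorffMeasure_inter_closedBall hyK hvK hvx)
  have hΓ := hball (isPreconnected_Icc.image γ hc) hy hz hzx
  by_cases h0 : γ 0 ∈ ball x r
  · rw [indicator_of_mem h0, two_mul]
    exact le_add_right (add_le_add hΓ le_rfl)
  by_cases h1 : γ 1 ∈ ball x r
  · rw [indicator_of_mem h1, two_mul]
    exact add_le_add (le_add_right hΓ) le_rfl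
  obtain ⟨s, hs, rfl⟩ := hy
  have hsub0 : Icc 0 s ⊆ Icc (0 : ℝ) 1 := Icc_subset_Icc le_rfl hs.2
  have hsub1 : Icc s 1 ⊆ Icc (0 : ℝ) 1 := Icc_subset_Icc hs.1 le_rfl
  have hleft := hball (isPreconnected_Icc.image γ (hc.mono hsub0))
    (mem_image_of_mem γ ⟨hs.1, le_rfl⟩) (mem_image_of_mem γ ⟨le_rfl, hs.1⟩)
    (not_lt.1 (mem_ball.not.1 h0))
  have hright := hball (isPreconnected_Icc.image γ (hc.mono hsub1))
    (mem_image_of_mem γ ⟨le_rfl, hs.2⟩) (mem_image_of_mem γ ⟨hs.2, le_rfl⟩)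
    (not_lt.1 (mem_ball.not.1 h1))
  have hdisj :
      AEDisjoint μH[1] (γ '' Icc 0 s ∩ closedBall x r) (γ '' Icc s 1 ∩ closedBall x r) := by
    refine measure_mono_null (inter_subset_inter inter_subset_left inter_subset_left) ?_
    rw [← hi.image_inter hsub0 hsub1, Icc_inter_Icc_eq_singleton hs.1 hs.2, image_singleton]
    exact (Measure.nullSingletonClass_hausdorff X one_pos).measure_singleton _
  have hmeas : NullMeasurableSet (γ '' Icc s 1 ∩ closedBall x r) μH[1] :=
    ((isCompact_Icc.image_of_continuousOn (hc.mono hsub1)).isClosed.measurableSet.inter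
      measurableSet_closedBall).nullMeasurableSet
  calc 2 * ENNReal.ofReal (r - ε)
      ≤ μH[1] (γ '' Icc 0 s ∩ closedBall x r) + μH[1] (γ '' Icc s 1 ∩ closedBall x r) := by
        rw [two_mul]; exact add_le_add hleft hright
    _ = μH[1] ((γ '' Icc 0 s ∪ γ '' Icc s 1) ∩ closedBall x r) := by
        rw [union_inter_distrib_right, measure_union₀ hmeas hdisj]
    _ ≤ μH[1] (γ '' Icc 0 1 ∩ closedBall x r) := by
        gcongr; exact union_subset (image_mono hsub0) (image_mono hsub1)
    _ = _ := by simp [indicator_of_notMem h0, indicator_of_notMem h1]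

theorem IsSimpleArc.sum_two_mul_ofReal_sub_le_hausdorffMeasure {Γm Γ : Set X}
    (hΓm : IsSimpleArc Γm) {p : X} (hp : p ∈ Γ) {F : Finset X} {r : X → ℝ} {ε η : ℝ}
    (hF : ∀ x ∈ F, x ∈ Γ ∧ r x < η ∧ r x + ε ≤ dist x p)
    (hdisj : (F : Set X).PairwiseDisjoint fun x => closedBall x (r x))
    (hd : hausdorffDist Γm Γ < ε) (hfin : hausdorffEDist Γm Γ ≠ ∞) :
    ∑ x ∈ F, 2 * ENNReal.ofReal (r x - ε) ≤ μH[1] Γm + 2 * ENNReal.ofReal η := by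
  have hε : 0 ≤ ε := hausdorffDist_nonneg.trans hd.le
  obtain ⟨γ, hc, hi, rfl⟩ := hΓm
  set I : X → X → ℝ≥0∞ := fun x => (ball x (r x)).indicator fun _ => ENNReal.ofReal η
  have hball : ∀ x ∈ F, 2 * ENNReal.ofReal (r x - ε) ≤
      μH[1] (γ '' Icc 0 1 ∩ closedBall x (r x)) + I x (γ 0) + I x (γ 1) := by
    intro x hx
    obtain ⟨hxΓ, hrη, hrp⟩ := hF x hx
    obtain ⟨y, hy, hyx⟩ := exists_dist_lt_of_hausdorffDist_lt' hxΓ hd hfin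
    obtain ⟨z, hz, hzp⟩ := exists_dist_lt_of_hausdorffDist_lt' hp hd hfin
    have hzx : r x ≤ dist z x := by linarith [dist_triangle_left x p z]
    have hI : ∀ q, (ball x (r x)).indicator (fun _ => ENNReal.ofReal (r x - ε)) q ≤ I x q :=
      fun q => indicator_le_indicator (ENNReal.ofReal_le_ofReal (by linarith))
    calc _ ≤ _ := two_mul_ofReal_sub_le_hausdorffMeasure_inter_closedBall hc hi hy hyx.le hz hzx
      _ ≤ _ := by gcongr <;> exact hI _
  have hend : ∀ q, ∑ x ∈ F, I x q ≤ ENNReal.ofReal η := by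
    intro q
    rw [← Finset.indicator_biUnion_apply F _ (hdisj.mono fun x => ball_subset_closedBall)]
    exact indicator_le_self _ _ q
  have hsum :
      ∑ x ∈ F, μH[1] (γ '' Icc 0 1 ∩ closedBall x (r x)) ≤ μH[1] (γ '' Icc 0 1) := by
    calc _ = ∑ x ∈ F, μH[1].restrict (γ '' Icc 0 1) (closedBall x (r x)) := by
          simp_rw [Measure.restrict_apply measurableSet_closedBall, inter_comm]
      _ ≤ μH[1].restrict (γ '' Icc 0 1) univ :=
          sum_measure_le_measure_univ (fun x _ => measurableSet_closedBall.nullMeasurableSet)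
            fun x hx y hy hxy => (hdisj hx hy hxy).aedisjoint
      _ = μH[1] (γ '' Icc 0 1) := Measure.restrict_apply_univ _
  calc ∑ x ∈ F, 2 * ENNReal.ofReal (r x - ε)
      ≤ ∑ x ∈ F, (μH[1] (γ '' Icc 0 1 ∩ closedBall x (r x)) + I x (γ 0) + I x (γ 1)) :=
        Finset.sum_le_sum hball
    _ = ∑ x ∈ F, μH[1] (γ '' Icc 0 1 ∩ closedBall x (r x)) + ∑ x ∈ F, I x (γ 0) +
          ∑ x ∈ F, I x (γ 1) := by
        rw [Finset.sum_add_distrib, Finset.sum_add_distrib]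
    _ ≤ μH[1] (γ '' Icc 0 1) + ENNReal.ofReal η + ENNReal.ofReal η := by
        gcongr <;> exact hend _
    _ = _ := by rw [two_mul, add_assoc]

theorem sum_two_mul_ofReal_le_liminf_hausdorffMeasure {Γ : Set X} (hΓ : Bornology.IsBounded Γ)
    {Γs : ℕ → Set X} (hΓs : ∀ m, IsSimpleArc (Γs m))
    (hconv : Tendsto (fun m => hausdorffDist (Γs m) Γ) atTop (𝓝 0)) {p : X} (hp : p ∈ Γ)
    {F : Finset X} {r : X → ℝ} {η : ℝ} (hF : ∀ x ∈ F, x ∈ Γ ∧ r x < η ∧ r x < dist x p)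
    (hdisj : (F : Set X).PairwiseDisjoint fun x => closedBall x (r x)) :
    ∑ x ∈ F, 2 * ENNReal.ofReal (r x) ≤
      liminf (fun m => μH[1] (Γs m)) atTop + 2 * ENNReal.ofReal η := by
  have hfin : ∀ m, hausdorffEDist (Γs m) Γ ≠ ∞ := fun m =>
    hausdorffEDist_ne_top_of_nonempty_of_bounded (hΓs m).nonempty ⟨p, hp⟩
      (hΓs m).isCompact.isBounded hΓ
  have hshrunk : ∀ ε > 0, (∀ x ∈ F, r x + ε ≤ dist x p) →
      ∑ x ∈ F, 2 * ENNReal.ofReal (r x - ε) ≤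
        liminf (fun m => μH[1] (Γs m)) atTop + 2 * ENNReal.ofReal η := by
    intro ε hε hεF
    rw [← tsub_le_iff_right]
    refine le_liminf_of_le (by isBoundedDefault) ?_
    filter_upwards [hconv.eventually (gt_mem_nhds hε)] with m hm
    exact tsub_le_iff_right.2 <| (hΓs m).sum_two_mul_ofReal_sub_le_hausdorffMeasure hp
      (fun x hx => ⟨(hF x hx).1, (hF x hx).2.1, hεF x hx⟩) hdisj hm (hfin m)
  have hlim : Tendsto (fun ε => ∑ x ∈ F, 2 * ENNReal.ofReal (r x - ε)) (𝓝[>] 0)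
      (𝓝 (∑ x ∈ F, 2 * ENNReal.ofReal (r x))) := by
    have hcont : Continuous fun ε : ℝ => ∑ x ∈ F, 2 * ENNReal.ofReal (r x - ε) :=
      continuous_finsetSum _ fun x _ => (ENNReal.continuous_const_mul ofNat_ne_top).comp
        (ENNReal.continuous_ofReal.comp (continuous_const.sub continuous_id))
    simpa using (hcont.tendsto 0).mono_left nhdsWithin_le_nhds
  have hsmall : ∀ᶠ ε in 𝓝[>] (0 : ℝ), ∀ x ∈ F, r x + ε ≤ dist x p :=
    (eventually_all_finset F).2 fun x hx =>
      ((eventually_lt_nhds (sub_pos.2 (hF x hx).2.2)).filter_mono nhdsWithin_le_nhds).mono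
        fun ε hε => by linarith
  refine le_of_tendsto hlim ?_
  filter_upwards [self_mem_nhdsWithin, hsmall] with ε hε hεF using hshrunk ε hε hεF

section Besicovitch

variable [SecondCountableTopology X] [HasBesicovitchCovering X]

theorem exists_closedBall_cover_ae_mul_tsum_le (ρ : Measure X) {c : ℝ≥0∞} {E U : Set X}
    (hE : μH[1] E ≠ ∞) (hU : IsOpen U) (hEU : E ⊆ U)
    (h : ∀ x ∈ E, ∃ᶠ r in 𝓝[>] 0, c * (2 * ENNReal.ofReal r) ≤ ρ (closedBall x r))
    {δ : ℝ} (hδ : 0 < δ) :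
    ∃ (T : Set X) (R : X → ℝ), T.Countable ∧ (∀ x ∈ T, R x < δ) ∧
      μH[1] (E \ ⋃ x ∈ T, closedBall x (R x)) = 0 ∧
      c * ∑' x : T, 2 * ENNReal.ofReal (R x) ≤ ρ U := by
  have : IsFiniteMeasure (μH[1].restrict E) := isFiniteMeasure_restrict.2 hE
  have hgood : ∀ x ∈ E, ∀ ε > 0, ({r | closedBall x r ⊆ U ∧
      c * (2 * ENNReal.ofReal r) ≤ ρ (closedBall x r)} ∩ Ioo 0 ε).Nonempty := by
    intro x hx ε hε
    obtain ⟨ε', hε', hball⟩ := isOpen_iff.1 hU x (hEU hx)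
    have hsmall : ∀ᶠ r in 𝓝[>] (0 : ℝ), r ∈ Ioo 0 (min ε ε') :=
      Ioo_mem_nhdsGT (lt_min hε hε')
    obtain ⟨r, hρ, hr⟩ := ((h x hx).and_eventually hsmall).exists
    exact ⟨r, ⟨(closedBall_subset_ball (hr.2.trans_le (min_le_right _ _))).trans hball, hρ⟩,
      hr.1, hr.2.trans_le (min_le_left _ _)⟩
  obtain ⟨T, R, hTc, -, hR, hnull, hdisj⟩ := Besicovitch.exists_disjoint_closedBall_covering_ae
    (μH[1].restrict E) _ E hgood (fun _ => δ) fun _ _ => hδ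
  have : Countable T := hTc.to_subtype
  refine ⟨T, R, hTc, fun x hx => (hR x hx).2.2, ?_, ?_⟩
  · rw [← inter_eq_left.2 (sdiff_subset (t := ⋃ x ∈ T, closedBall x (R x)))]
    exact nonpos_iff_eq_zero.1 ((Measure.le_restrict_apply E _).trans hnull.le)
  · calc c * ∑' x : T, 2 * ENNReal.ofReal (R x)
        = ∑' x : T, c * (2 * ENNReal.ofReal (R x)) := ENNReal.tsum_mul_left.symm
      _ ≤ ∑' x : T, ρ (closedBall x (R x)) := ENNReal.tsum_le_tsum fun x => (hR x x.2).1.2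
      _ = ρ (⋃ x ∈ T, closedBall x (R x)) :=
          (measure_biUnion hTc hdisj fun _ _ => measurableSet_closedBall).symm
      _ ≤ ρ U := measure_mono (iUnion₂_subset fun x hx => (hR x hx).1.1)

theorem mul_hausdorffMeasure_le_of_frequently_le_measure_closedBall (ρ : Measure X)
    {c : ℝ≥0∞} (hc : c ≠ ∞) {E U : Set X} (hE : μH[1] E ≠ ∞) (hU : IsOpen U) (hEU : E ⊆ U)
    (h : ∀ x ∈ E, ∃ᶠ r in 𝓝[>] 0, c * (2 * ENNReal.ofReal r) ≤ ρ (closedBall x r)) :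
    c * μH[1] E ≤ ρ U := by
  choose T R hTc hR hnull hsum using fun k : ℕ =>
    exists_closedBall_cover_ae_mul_tsum_le ρ hE hU hEU h (Nat.one_div_pos_of_nat (n := k))
  have := fun k => (hTc k).to_subtype
  set V : ℕ → Set X := fun k => ⋃ x ∈ T k, closedBall x (R k x)
  have hEV : μH[1] E ≤ μH[1] (E ∩ ⋂ k, V k) := by
    calc μH[1] E ≤ μH[1] (E ∩ ⋂ k, V k) + μH[1] (⋃ k, E \ V k) := by
          rw [← sdiff_iInter]; exact measure_le_inter_add_sdiff _ _ _
      _ = μH[1] (E ∩ ⋂ k, V k) := by rw [measure_iUnion_null hnull, add_zero]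
  have hcover : μH[1] (E ∩ ⋂ k, V k) ≤
      liminf (fun k => ∑' x : T k, 2 * ENNReal.ofReal (R k x)) atTop := by
    refine (Measure.hausdorffMeasure_le_liminf_tsum (l := atTop) 1 _
      (fun k : ℕ => 2 * ENNReal.ofReal (1 / (k + 1))) ?_
      (fun k (x : T k) => closedBall (x : X) (R k x)) ?_ ?_).trans ?_
    · simpa using ENNReal.Tendsto.const_mul
        (ENNReal.tendsto_ofReal tendsto_one_div_add_atTop_nhds_zero_nat) (Or.inr ofNat_ne_top)
    · exact Eventually.of_forall fun k x => (ediam_closedBall_le_two_mul_ofReal _ _).trans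
        (by gcongr; exact (hR k x x.2).le)
    · exact Eventually.of_forall fun k y hy => by simpa [V] using mem_iInter.1 hy.2 k
    · simp only [ENNReal.rpow_one]
      exact liminf_le_liminf (Eventually.of_forall fun k =>
        ENNReal.tsum_le_tsum fun x => ediam_closedBall_le_two_mul_ofReal _ _)
  calc c * μH[1] E
      ≤ c * liminf (fun k => ∑' x : T k, 2 * ENNReal.ofReal (R k x)) atTop := by
        gcongr; exact hEV.trans hcover
    _ = liminf (fun k => c * ∑' x : T k, 2 * ENNReal.ofReal (R k x)) atTop :=
        (ENNReal.liminf_const_mul_of_ne_top hc).symm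
    _ ≤ ρ U := liminf_le_of_frequently_le' (Frequently.of_forall hsum)

theorem hausdorffMeasure_setOf_frequently_le_restrict_closedBall_eq_zero {Γ : Set X}
    (hΓ : μH[1] Γ ≠ ∞) {c : ℝ≥0∞} (hc1 : 1 < c) (hc : c ≠ ∞) :
    μH[1] {x ∈ Γ | ∃ᶠ r in 𝓝[>] 0,
      c * (2 * ENNReal.ofReal r) ≤ μH[1].restrict Γ (closedBall x r)} = 0 := by
  set E := {x ∈ Γ | ∃ᶠ r in 𝓝[>] 0,
    c * (2 * ENNReal.ofReal r) ≤ μH[1].restrict Γ (closedBall x r)}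
  have : IsFiniteMeasure (μH[1].restrict Γ) := isFiniteMeasure_restrict.2 hΓ
  have hE : μH[1] E ≠ ∞ := ne_top_of_le_ne_top hΓ (measure_mono (sep_subset _ _))
  have hle : c * μH[1] E ≤ μH[1] E :=
    calc c * μH[1] E ≤ μH[1].restrict Γ E := by
          rw [measure_eq_iInf_isOpen E (μH[1].restrict Γ)]
          exact le_iInf₂ fun U hEU => le_iInf fun hU =>
            mul_hausdorffMeasure_le_of_frequently_le_measure_closedBall _ hc hE hU hEU
              fun x hx => hx.2
      _ ≤ μH[1] E := Measure.restrict_apply_le _ _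
  by_contra h0
  exact (one_mul (μH[1] E) ▸ ENNReal.mul_lt_mul_left h0 hE hc1).not_ge hle

theorem exists_pairwiseDisjoint_closedBall_hausdorffMeasure_le {Γ : Set X}
    (hΓ : μH[1] Γ ≠ ∞) (p : X) {η : ℝ} (hη : 0 < η) :
    ∃ (T : Set X) (r : X → ℝ), T.Countable ∧
      (∀ x ∈ T, x ∈ Γ ∧ r x < η ∧ r x < dist x p) ∧
      T.PairwiseDisjoint (fun x => closedBall x (r x)) ∧
      μH[1] Γ ≤ ENNReal.ofReal (1 + η) * ∑' x : T, 2 * ENNReal.ofReal (r x) := by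
  set c := ENNReal.ofReal (1 + η)
  set ρ := μH[1].restrict Γ
  have : IsFiniteMeasure ρ := isFiniteMeasure_restrict.2 hΓ
  set E := {x ∈ Γ | ∃ᶠ r in 𝓝[>] 0, c * (2 * ENNReal.ofReal r) ≤ ρ (closedBall x r)}
  have hE : μH[1] E = 0 := hausdorffMeasure_setOf_frequently_le_restrict_closedBall_eq_zero hΓ
    (by simpa [c] using hη) ENNReal.ofReal_ne_top
  set G := Γ \ (E ∪ {p})
  have hgood : ∀ x ∈ G, ∀ δ > 0, ({r | r < η ∧ r < dist x p ∧
      ρ (closedBall x r) < c * (2 * ENNReal.ofReal r)} ∩ Ioo 0 δ).Nonempty := by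
    intro x hx δ hδ
    have hρ : ∀ᶠ r in 𝓝[>] (0 : ℝ), ρ (closedBall x r) < c * (2 * ENNReal.ofReal r) := by
      simpa [not_frequently, E, hx.1] using hx.2 ∘ Or.inl
    have hp : 0 < dist x p := dist_pos.2 fun hxp => hx.2 (Or.inr hxp)
    have hsmall : ∀ᶠ r in 𝓝[>] (0 : ℝ), r ∈ Ioo 0 (min δ (min η (dist x p))) :=
      Ioo_mem_nhdsGT (lt_min hδ (lt_min hη hp))
    obtain ⟨r, hr, hρr⟩ := (hsmall.and hρ).exists
    exact ⟨r, ⟨hr.2.trans_le ((min_le_right _ _).trans (min_le_left _ _)),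
      hr.2.trans_le ((min_le_right _ _).trans (min_le_right _ _)), hρr⟩,
      hr.1, hr.2.trans_le (min_le_left _ _)⟩
  obtain ⟨T, r, hTc, hTG, hr, hnull, hdisj⟩ :=
    Besicovitch.exists_disjoint_closedBall_covering_ae ρ _ G hgood (fun _ => 1) fun _ _ => one_pos
  have : Countable T := hTc.to_subtype
  refine ⟨T, r, hTc, fun x hx => ⟨(hTG hx).1, (hr x hx).1.1, (hr x hx).1.2.1⟩, hdisj, ?_⟩
  set V := ⋃ x ∈ T, closedBall x (r x)
  have hΓG : ρ (Γ \ G) = 0 := by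
    refine measure_mono_null (fun y hy => ?_) (nonpos_iff_eq_zero.1 <|
      (Measure.restrict_apply_le _ _).trans_eq <| measure_union_null hE <|
        (Measure.nullSingletonClass_hausdorff X one_pos).measure_singleton p)
    by_contra hyE
    exact hy.2 ⟨hy.1, hyE⟩
  have hΓV : ρ (Γ \ V) = 0 := measure_mono_null
    (fun y hy =>
      by_cases (fun hyG : y ∈ G => Or.inr ⟨hyG, hy.2⟩) fun hyG => Or.inl ⟨hy.1, hyG⟩)
    (measure_union_null hΓG hnull)
  calc μH[1] Γ = ρ Γ := (Measure.restrict_apply_self _ _).symm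
    _ ≤ ρ (Γ ∩ V) + ρ (Γ \ V) := measure_le_inter_add_sdiff _ _ _
    _ ≤ ρ V := by rw [hΓV, add_zero]; exact measure_mono inter_subset_right
    _ = ∑' x : T, ρ (closedBall x (r x)) :=
        measure_biUnion hTc hdisj fun _ _ => measurableSet_closedBall
    _ ≤ ∑' x : T, c * (2 * ENNReal.ofReal (r x)) :=
        ENNReal.tsum_le_tsum fun x => (hr x x.2).1.2.2.le
    _ = c * ∑' x : T, 2 * ENNReal.ofReal (r x) := ENNReal.tsum_mul_left

end Besicovitch

theorem ENNReal.le_of_forall_pos_le_ofReal_one_add_mul {a b : ℝ≥0∞}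
    (h : ∀ η > 0, a ≤ ENNReal.ofReal (1 + η) * (b + 2 * ENNReal.ofReal η)) : a ≤ b := by
  have h1 : Tendsto (fun η : ℝ => ENNReal.ofReal (1 + η)) (𝓝 0) (𝓝 1) := by
    simpa using ENNReal.tendsto_ofReal ((continuous_const_add (1 : ℝ)).tendsto 0)
  have h2 : Tendsto (fun η : ℝ => b + 2 * ENNReal.ofReal η) (𝓝 0) (𝓝 b) := by
    simpa using tendsto_const_nhds.add (ENNReal.Tendsto.const_mul
      (ENNReal.tendsto_ofReal (tendsto_id (x := 𝓝 (0 : ℝ)))) (Or.inr (ofNat_ne_top (n := 2))))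
  have hlim : Tendsto (fun η => ENNReal.ofReal (1 + η) * (b + 2 * ENNReal.ofReal η)) (𝓝[>] 0)
      (𝓝 b) := by
    simpa using (ENNReal.Tendsto.mul h1 (Or.inl one_ne_zero) h2 (Or.inr one_ne_top)).mono_left
      nhdsWithin_le_nhds
  exact ge_of_tendsto hlim (eventually_nhdsWithin_of_forall h)

theorem length_lower_semicontinuous {n : ℕ}
    (Γ : Set (EuclideanSpace ℝ (Fin n))) (hΓ : IsSimpleRectifiableCurve Γ)
    (Γs : ℕ → Set (EuclideanSpace ℝ (Fin n)))
    (hΓs : ∀ m, IsSimpleRectifiableCurve (Γs m))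
    (hconv : Tendsto (fun m => hausdorffDist (Γs m) Γ) atTop (nhds 0)) :
    μH[1] Γ ≤ Filter.liminf (fun m => μH[1] (Γs m)) atTop := by
  obtain ⟨hΓarc, hΓfin⟩ : IsSimpleArc Γ ∧ μH[1] Γ < ∞ := hΓ
  obtain ⟨p, hp⟩ := hΓarc.nonempty
  have hbound : ∀ η > 0, μH[1] Γ ≤
      ENNReal.ofReal (1 + η) *
        (liminf (fun m => μH[1] (Γs m)) atTop + 2 * ENNReal.ofReal η) := by
    intro η hη
    obtain ⟨T, r, -, hT, hdisj, hΓT⟩ :=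
      exists_pairwiseDisjoint_closedBall_hausdorffMeasure_le hΓfin.ne p hη
    refine hΓT.trans (mul_le_mul_right ?_ _)
    rw [tsum_subtype T fun x => 2 * ENNReal.ofReal (r x)]
    refine ENNReal.summable.tsum_le_of_sum_le fun F => ?_
    classical
    simp only [indicator_apply, ← Finset.sum_filter]
    exact sum_two_mul_ofReal_le_liminf_hausdorffMeasure hΓarc.isCompact.isBounded
      (fun m => (hΓs m).1) hconv hp (fun x hx => hT x (Finset.mem_filter.1 hx).2)
      (hdisj.subset fun x hx => (Finset.mem_filter.1 hx).2)
  exact le_of_forall_pos_le_ofReal_one_add_mul hbound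
end

section
/- For every simple rectifiable curve Γ ⊆ ℝⁿ and every ε > 0, there exists δ > 0 such that every simple rectifiable curve Γ' with d_H(Γ, Γ') < δ satisfies H¹(Γ') > H¹(Γ) − ε. -/
open Set Metric Filter MeasureTheory ENNReal

/-!
A simple arc `γ` of finite length `L` is parametrized by arc length: `t ↦ H¹(γ '' [0, t])` is
continuous onto `[0, L]` and dominates the chordal distance, so `γ` factors through it via a
`1`-Lipschitz map, and rescaling gives an `L`-Lipschitz map of `[0, 1]` onto the arc.
If curves converging to `Γ` in Hausdorff distance all had length at most `H¹(Γ) - ε`,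
Arzelà–Ascoli would produce a uniform limit of such `(H¹(Γ) - ε)`-Lipschitz parametrizations whose
image contains `Γ`, so `H¹(Γ) ≤ H¹(Γ) - ε`, which is absurd since `0 < H¹(Γ) < ∞`.
-/

open scoped NNReal Topology BoundedContinuousFunction

open Function in
theorem exists_lipschitzOnWith_one_comp_eqOn {α β Y : Type*} [Nonempty α]
    [PseudoMetricSpace β] [MetricSpace Y] {f : α → Y} {m : α → β} {s : Set α}
    (h : ∀ x ∈ s, ∀ y ∈ s, dist (f x) (f y) ≤ dist (m x) (m y)) :
    ∃ g : β → Y, LipschitzOnWith 1 g (m '' s) ∧ EqOn (g ∘ m) f s := by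
  have hinv : ∀ x ∈ s, invFunOn m s (m x) ∈ s ∧ m (invFunOn m s (m x)) = m x := fun x hx =>
    ⟨invFunOn_mem ⟨x, hx, rfl⟩, invFunOn_eq ⟨x, hx, rfl⟩⟩
  refine ⟨f ∘ invFunOn m s, ?_, fun x hx => ?_⟩
  · refine LipschitzOnWith.of_dist_le_mul ?_
    rintro _ ⟨x, hx, rfl⟩ _ ⟨y, hy, rfl⟩
    simpa [(hinv x hx).2, (hinv y hy).2] using h _ (hinv x hx).1 _ (hinv y hy).1
  · exact dist_le_zero.1 (by simpa [(hinv x hx).2] using h _ (hinv x hx).1 x hx)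

section Arc

variable {E : Type*} [MetricSpace E] [MeasurableSpace E] [BorelSpace E]

theorem edist_le_hausdorffMeasure_of_isPreconnected {S : Set E} (hS : IsPreconnected S)
    {a b : E} (ha : a ∈ S) (hb : b ∈ S) : edist a b ≤ μH[1] S := by
  have hIcc : Icc 0 (dist a b) ⊆ (dist · a) '' S :=
    (hS.image _ (continuous_id.dist continuous_const).continuousOn).Icc_subset
      ⟨a, ha, dist_self a⟩ ⟨b, hb, dist_comm b a⟩
  calc edist a b = μH[1] (Icc 0 (dist a b)) := by
        rw [hausdorffMeasure_real, Real.volume_Icc, sub_zero, edist_dist]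
    _ ≤ μH[1] ((dist · a) '' S) := measure_mono hIcc
    _ ≤ μH[1] S := by
        simpa using (LipschitzWith.dist_left a).hausdorffMeasure_image_le zero_le_one S

theorem hausdorffMeasure_image_Icc_pos {γ : ℝ → E} {a b : ℝ} (hab : a < b)
    (hcont : ContinuousOn γ (Icc a b)) (hinj : InjOn γ (Icc a b)) :
    0 < μH[1] (γ '' Icc a b) := by
  have ha : a ∈ Icc a b := left_mem_Icc.2 hab.le
  have hb : b ∈ Icc a b := right_mem_Icc.2 hab.le
  calc 0 < edist (γ a) (γ b) := edist_pos.2 (hinj.ne ha hb hab.ne)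
    _ ≤ μH[1] (γ '' Icc a b) := edist_le_hausdorffMeasure_of_isPreconnected
        (isPreconnected_Icc.image _ hcont) (mem_image_of_mem _ ha) (mem_image_of_mem _ hb)

theorem hausdorffMeasure_image_Icc_add {γ : ℝ → E} {a b c : ℝ} (hab : a ≤ b) (hbc : b ≤ c)
    (hcont : ContinuousOn γ (Icc a c)) (hinj : InjOn γ (Icc a c)) :
    μH[1] (γ '' Icc a c) = μH[1] (γ '' Icc a b) + μH[1] (γ '' Icc b c) := by
  have := Measure.nullSingletonClass_hausdorff E one_pos
  have hsplit : γ '' Icc a c = γ '' Icc a b ∪ γ '' Icc b c := by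
    rw [← image_union, Icc_union_Icc_eq_Icc hab hbc]
  have hinter : γ '' Icc a b ∩ γ '' Icc b c = {γ b} := by
    rw [← hinj.image_inter (Icc_subset_Icc_right hbc) (Icc_subset_Icc_left hab),
      Icc_inter_Icc_eq_singleton hab hbc, image_singleton]
  have hmeas : MeasurableSet (γ '' Icc b c) :=
    (isCompact_Icc.image_of_continuousOn (hcont.mono (Icc_subset_Icc_left hab))).measurableSet
  rw [hsplit, ← measure_union_add_inter _ hmeas, hinter, measure_singleton, add_zero]

/-- Because of `toReal`, this is a junk `0` when the arc `γ '' Icc 0 t` has infinite length. -/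
noncomputable def arcLength (γ : ℝ → E) (t : ℝ) : ℝ := (μH[1] (γ '' Icc 0 t)).toReal

variable {γ : ℝ → E}

theorem hausdorffMeasure_image_ne_top_of_subset {s : Set ℝ} (hfin : μH[1] (γ '' Icc 0 1) ≠ ∞)
    (hs : s ⊆ Icc 0 1) : μH[1] (γ '' s) ≠ ∞ :=
  ne_top_of_le_ne_top hfin (measure_mono (image_mono hs))

theorem dist_arcLength (hcont : ContinuousOn γ (Icc 0 1)) (hinj : InjOn γ (Icc 0 1))
    (hfin : μH[1] (γ '' Icc 0 1) ≠ ∞) {s t : ℝ} (hs : s ∈ Icc (0 : ℝ) 1)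
    (ht : t ∈ Icc (0 : ℝ) 1) :
    dist (arcLength γ s) (arcLength γ t) = (μH[1] (γ '' uIcc s t)).toReal := by
  wlog hst : s ≤ t generalizing s t
  · rw [dist_comm, uIcc_comm]
    exact this ht hs (le_of_not_ge hst)
  have hsub : Icc 0 t ⊆ Icc 0 1 := Icc_subset_Icc_right ht.2
  rw [uIcc_of_le hst, arcLength, arcLength,
    hausdorffMeasure_image_Icc_add hs.1 hst (hcont.mono hsub) (hinj.mono hsub),
    ENNReal.toReal_add (hausdorffMeasure_image_ne_top_of_subset hfin (Icc_subset_Icc_right hs.2))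
      (hausdorffMeasure_image_ne_top_of_subset hfin (Icc_subset_Icc hs.1 ht.2)),
    Real.dist_eq, sub_add_cancel_left, abs_neg, abs_of_nonneg ENNReal.toReal_nonneg]

theorem dist_le_dist_arcLength (hcont : ContinuousOn γ (Icc 0 1)) (hinj : InjOn γ (Icc 0 1))
    (hfin : μH[1] (γ '' Icc 0 1) ≠ ∞) {s t : ℝ} (hs : s ∈ Icc (0 : ℝ) 1)
    (ht : t ∈ Icc (0 : ℝ) 1) : dist (γ s) (γ t) ≤ dist (arcLength γ s) (arcLength γ t) := by
  have hsub : uIcc s t ⊆ Icc 0 1 := uIcc_subset_Icc hs ht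
  rw [dist_arcLength hcont hinj hfin hs ht, dist_edist]
  exact ENNReal.toReal_mono (hausdorffMeasure_image_ne_top_of_subset hfin hsub)
    (edist_le_hausdorffMeasure_of_isPreconnected (isPreconnected_uIcc.image _ (hcont.mono hsub))
      (mem_image_of_mem _ left_mem_uIcc) (mem_image_of_mem _ right_mem_uIcc))

theorem tendsto_hausdorffMeasure_image_inter_closedBall (hcont : ContinuousOn γ (Icc 0 1))
    (hinj : InjOn γ (Icc 0 1)) (hfin : μH[1] (γ '' Icc 0 1) ≠ ∞) {t₀ : ℝ}
    (ht₀ : t₀ ∈ Icc (0 : ℝ) 1) :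
    Tendsto (fun r => μH[1] (γ '' (Icc 0 1 ∩ closedBall t₀ r))) (𝓝[>] 0) (𝓝 0) := by
  have hball : ⋂ r > (0 : ℝ), Icc 0 1 ∩ closedBall t₀ r = {t₀} := by
    refine Subset.antisymm ?_ fun x hx => ?_
    · rw [← closedBall_zero, ← biInter_gt_closedBall]
      exact iInter₂_mono fun _ _ => inter_subset_right
    · rw [mem_singleton_iff.1 hx]
      exact mem_iInter₂.2 fun r hr => ⟨ht₀, mem_closedBall_self hr.le⟩
  have hinter : ⋂ r > (0 : ℝ), γ '' (Icc 0 1 ∩ closedBall t₀ r) = {γ t₀} := by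
    rw [← (hinj.mono (iUnion₂_subset fun _ _ => inter_subset_left)).image_biInter_eq
      ⟨1, one_pos⟩, hball, image_singleton]
  have hcpt : ∀ r, IsCompact (γ '' (Icc 0 1 ∩ closedBall t₀ r)) := fun r =>
    (isCompact_Icc.inter_right isClosed_closedBall).image_of_continuousOn
      (hcont.mono inter_subset_left)
  have := Measure.nullSingletonClass_hausdorff E one_pos
  simpa [Function.comp_def, hinter] using tendsto_measure_biInter_gt (μ := μH[1]) (a := (0 : ℝ))
    (fun r _ => (hcpt r).measurableSet.nullMeasurableSet)
    (fun i j _ hij => image_mono (inter_subset_inter_right _ (closedBall_subset_closedBall hij)))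
    ⟨1, one_pos, hausdorffMeasure_image_ne_top_of_subset hfin inter_subset_left⟩

theorem continuousOn_arcLength (hcont : ContinuousOn γ (Icc 0 1)) (hinj : InjOn γ (Icc 0 1))
    (hfin : μH[1] (γ '' Icc 0 1) ≠ ∞) : ContinuousOn (arcLength γ) (Icc 0 1) := by
  intro t₀ ht₀
  rw [Metric.continuousWithinAt_iff]
  intro ε hε
  obtain ⟨r, hr_small, hr⟩ :=
    (((tendsto_hausdorffMeasure_image_inter_closedBall hcont hinj hfin ht₀).eventually
      (gt_mem_nhds (ofReal_pos.2 hε))).and self_mem_nhdsWithin).exists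
  refine ⟨r, hr, fun t ht hdist => ?_⟩
  have hsub : uIcc t t₀ ⊆ Icc 0 1 ∩ closedBall t₀ r :=
    subset_inter (uIcc_subset_Icc ht ht₀) ((convex_closedBall t₀ r).ordConnected.uIcc_subset
      (mem_closedBall.2 hdist.le) (mem_closedBall_self hr.le))
  rw [dist_arcLength hcont hinj hfin ht ht₀]
  calc (μH[1] (γ '' uIcc t t₀)).toReal ≤ (μH[1] (γ '' (Icc 0 1 ∩ closedBall t₀ r))).toReal :=
        ENNReal.toReal_mono (hausdorffMeasure_image_ne_top_of_subset hfin inter_subset_left)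
          (measure_mono (image_mono hsub))
    _ < ε := ENNReal.toReal_lt_of_lt_ofReal hr_small

theorem image_arcLength_Icc (hcont : ContinuousOn γ (Icc 0 1)) (hinj : InjOn γ (Icc 0 1))
    (hfin : μH[1] (γ '' Icc 0 1) ≠ ∞) : arcLength γ '' Icc 0 1 = Icc 0 (arcLength γ 1) := by
  refine Subset.antisymm ?_ ?_
  · rintro _ ⟨t, ht, rfl⟩
    exact ⟨ENNReal.toReal_nonneg,
      ENNReal.toReal_mono hfin (measure_mono (image_mono (Icc_subset_Icc_right ht.2)))⟩
  · have := Measure.nullSingletonClass_hausdorff E one_pos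
    have h0 : arcLength γ 0 = 0 := by simp [arcLength]
    simpa [h0] using intermediate_value_Icc zero_le_one (continuousOn_arcLength hcont hinj hfin)

theorem exists_lipschitzOnWith_one_image_Icc_arcLength (hcont : ContinuousOn γ (Icc 0 1))
    (hinj : InjOn γ (Icc 0 1)) (hfin : μH[1] (γ '' Icc 0 1) ≠ ∞) :
    ∃ g : ℝ → E, LipschitzOnWith 1 g (Icc 0 (arcLength γ 1)) ∧
      g '' Icc 0 (arcLength γ 1) = γ '' Icc 0 1 := by
  obtain ⟨g, hg, hgγ⟩ := exists_lipschitzOnWith_one_comp_eqOn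
    fun s hs t ht => dist_le_dist_arcLength hcont hinj hfin hs ht
  rw [image_arcLength_Icc hcont hinj hfin] at hg
  refine ⟨g, hg, ?_⟩
  rw [← image_arcLength_Icc hcont hinj hfin, image_image]
  exact hgγ.image_eq

end Arc

theorem LipschitzWith.hausdorffMeasure_range_le {E : Type*} [MetricSpace E] [MeasurableSpace E]
    [BorelSpace E] {a b : ℝ} (hab : a ≤ b) {c : ℝ≥0} {f : Icc a b → E}
    (hf : LipschitzWith c f) : μH[1] (range f) ≤ c * ENNReal.ofReal (b - a) := by
  have hext : LipschitzWith c (f ∘ projIcc a b hab) := by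
    simpa using hf.comp (LipschitzWith.projIcc hab)
  calc μH[1] (range f) = μH[1] ((f ∘ projIcc a b hab) '' Icc a b) := by
        rw [image_comp, (projIcc_surjOn hab).image_eq_of_mapsTo (mapsTo_univ _ _), image_univ]
    _ ≤ (c : ℝ≥0∞) ^ (1 : ℝ) * μH[1] (Icc a b) := hext.hausdorffMeasure_image_le zero_le_one _
    _ = c * ENNReal.ofReal (b - a) := by rw [hausdorffMeasure_real, Real.volume_Icc, rpow_one]

section UniformLimit

variable {α β : Type*}

theorem exists_lipschitzWith_tendstoUniformly_subseq [PseudoMetricSpace α] [CompactSpace α]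
    [MetricSpace β] {K : Set β} (hK : IsCompact K) {c : ℝ≥0} {f : ℕ → α → β}
    (hf : ∀ k, LipschitzWith c (f k)) (hfK : ∀ k x, f k x ∈ K) :
    ∃ g : α → β, LipschitzWith c g ∧
      ∃ φ : ℕ → ℕ, StrictMono φ ∧ TendstoUniformly (fun k => f (φ k)) g atTop := by
  let F : ℕ → α →ᵇ β := fun k => .mkOfCompact ⟨f k, (hf k).continuous⟩
  let A : Set (α →ᵇ β) := {h | LipschitzWith c h ∧ ∀ x, h x ∈ K}
  have hequi : Equicontinuous ((↑) : A → α → β) :=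
    (LipschitzWith.uniformEquicontinuous _ c fun h => h.2.1).equicontinuous
  have hA : IsCompact (closure A) :=
    BoundedContinuousFunction.arzela_ascoli K hK A (fun _ x h => h.2 x) hequi
  obtain ⟨g, hgA, φ, hφ, hlim⟩ :=
    hA.tendsto_subseq fun k => subset_closure (show F k ∈ A from ⟨hf k, hfK k⟩)
  have hg : g ∈ ((⇑) : (α →ᵇ β) → α → β) ⁻¹' {h | LipschitzWith c h} :=
    closure_minimal (fun _ hh => hh.1)
      ((isClosed_setOfPred_lipschitzWith c).preimage BoundedContinuousFunction.continuous_coe) hgA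
  exact ⟨g, hg, φ, hφ, BoundedContinuousFunction.tendsto_iff_tendstoUniformly.1 hlim⟩

theorem subset_range_of_tendstoUniformly [TopologicalSpace α] [CompactSpace α] [Nonempty α]
    [MetricSpace β] {Γ : Set β} (hΓ : Bornology.IsBounded Γ) {f : ℕ → α → β} {g : α → β}
    (hf : ∀ k, Continuous (f k)) (hfg : TendstoUniformly f g atTop)
    (hlim : Tendsto (fun k => hausdorffDist Γ (range (f k))) atTop (𝓝 0)) : Γ ⊆ range g := by
  intro x hx
  have hclosed : IsClosed (range g) :=
    (isCompact_range (hfg.continuous (Frequently.of_forall hf))).isClosed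
  rw [← hclosed.closure_eq, Metric.mem_closure_iff]
  intro ε hε
  obtain ⟨k, hk, hkg⟩ := ((hlim.eventually (gt_mem_nhds (half_pos hε))).and
    (Metric.tendstoUniformly_iff.1 hfg _ (half_pos hε))).exists
  obtain ⟨_, ⟨t, rfl⟩, hxt⟩ := exists_dist_lt_of_hausdorffDist_lt hx hk
    (hausdorffEDist_ne_top_of_nonempty_of_bounded ⟨x, hx⟩ (range_nonempty _) hΓ
      (isCompact_range (hf k)).isBounded)
  refine ⟨g t, mem_range_self t, ?_⟩
  calc dist x (g t) ≤ dist x (f k t) + dist (g t) (f k t) := dist_triangle_right _ _ _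
    _ < ε / 2 + ε / 2 := add_lt_add hxt (hkg t)
    _ = ε := add_halves ε

theorem hausdorffMeasure_le_of_tendsto_hausdorffDist [MetricSpace β] [ProperSpace β]
    [MeasurableSpace β] [BorelSpace β] {Γ : Set β} (hΓ : Bornology.IsBounded Γ) {c : ℝ≥0}
    {f : ℕ → Icc (0 : ℝ) 1 → β} (hf : ∀ k, LipschitzWith c (f k))
    (hlim : Tendsto (fun k => hausdorffDist Γ (range (f k))) atTop (𝓝 0)) : μH[1] Γ ≤ c := by
  rcases Γ.eq_empty_or_nonempty with rfl | hne
  · simp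
  obtain ⟨N, hN⟩ := eventually_atTop.1 (hlim.eventually (gt_mem_nhds one_pos))
  have hK : ∀ k x, f (k + N) x ∈ cthickening 1 Γ := fun k x => by
    obtain ⟨y, hy, hyx⟩ := exists_dist_lt_of_hausdorffDist_lt' (mem_range_self x)
      (hN _ (Nat.le_add_left N k)) (hausdorffEDist_ne_top_of_nonempty_of_bounded hne
        (range_nonempty _) hΓ (isCompact_range (hf _).continuous).isBounded)
    exact thickening_subset_cthickening _ _ (mem_thickening_iff.2 ⟨y, hy, dist_comm y _ ▸ hyx⟩)
  obtain ⟨g, hg, φ, hφ, hfg⟩ := exists_lipschitzWith_tendstoUniformly_subseq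
    (isCompact_of_isClosed_isBounded isClosed_cthickening hΓ.cthickening) (fun k => hf (k + N)) hK
  have hsub : Γ ⊆ range g := subset_range_of_tendstoUniformly hΓ
    (fun k => (hf _).continuous) hfg (((tendsto_add_atTop_iff_nat N).2 hlim).comp hφ.tendsto_atTop)
  calc μH[1] Γ ≤ μH[1] (range g) := measure_mono hsub
    _ ≤ c * ENNReal.ofReal (1 - 0) := hg.hausdorffMeasure_range_le zero_le_one
    _ = c := by simp

end UniformLimit

namespace IsSimpleRectifiableCurve

variable {n : ℕ} {S : Set (EuclideanSpace ℝ (Fin n))}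

theorem isCompact (hS : IsSimpleRectifiableCurve S) : IsCompact S := by
  obtain ⟨⟨γ, hcont, -, rfl⟩, -⟩ := hS
  exact isCompact_Icc.image_of_continuousOn hcont

theorem hausdorffMeasure_pos (hS : IsSimpleRectifiableCurve S) : 0 < μH[1] S := by
  obtain ⟨⟨γ, hcont, hinj, rfl⟩, -⟩ := hS
  exact hausdorffMeasure_image_Icc_pos zero_lt_one hcont hinj

theorem exists_lipschitzWith_range_eq (hS : IsSimpleRectifiableCurve S) {c : ℝ≥0}
    (hc : μH[1] S ≤ c) :
    ∃ f : Icc (0 : ℝ) 1 → EuclideanSpace ℝ (Fin n), LipschitzWith c f ∧ range f = S := by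
  obtain ⟨⟨γ, hcont, hinj, rfl⟩, hfin⟩ := hS
  obtain ⟨g, hg, hgγ⟩ := exists_lipschitzOnWith_one_image_Icc_arcLength hcont hinj hfin.ne
  set L := arcLength γ 1
  have hL : 0 ≤ L := ENNReal.toReal_nonneg
  have hLc : L ≤ c := ENNReal.toReal_le_coe_of_le_coe hc
  have hscale : ∀ u ∈ Icc (0 : ℝ) 1, L * u ∈ Icc 0 L := fun u hu =>
    ⟨mul_nonneg hL hu.1, mul_le_of_le_one_right hL hu.2⟩
  refine ⟨fun u => g (L * u), LipschitzWith.of_dist_le_mul fun u v => ?_, ?_⟩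
  · calc dist (g (L * u)) (g (L * v)) ≤ dist (L * u) (L * v) := by
          simpa using hg.dist_le_mul _ (hscale u u.2) _ (hscale v v.2)
      _ = L * dist u v := by
          rw [Real.dist_eq, ← mul_sub, abs_mul, abs_of_nonneg hL, Subtype.dist_eq, Real.dist_eq]
      _ ≤ c * dist u v := by gcongr
  · have hIcc : (L * ·) '' Icc 0 1 = Icc 0 L := by simpa using image_mul_left_Icc hL zero_le_one
    rw [← hgγ, ← hIcc, image_image, image_eq_range]

end IsSimpleRectifiableCurve

theorem length_lower_semicontinuous_uniform {n : ℕ}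
    (Γ : Set (EuclideanSpace ℝ (Fin n))) (hΓ : IsSimpleRectifiableCurve Γ)
    (ε : ℝ≥0∞) (hε : 0 < ε) :
    ∃ δ > (0 : ℝ), ∀ Γ' : Set (EuclideanSpace ℝ (Fin n)),
      IsSimpleRectifiableCurve Γ' → hausdorffDist Γ Γ' < δ →
      μH[1] Γ - ε < μH[1] Γ' := by
  have hfin : μH[1] Γ - ε ≠ ∞ := sub_ne_top hΓ.2.ne
  have hlt : μH[1] Γ - ε < μH[1] Γ :=
    ENNReal.sub_lt_self hΓ.2.ne hΓ.hausdorffMeasure_pos.ne' hε.ne'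
  by_contra! h
  choose S hS hSΓ hSε using fun k : ℕ => h (1 / (k + 1)) Nat.one_div_pos_of_nat
  choose f hf hfS using fun k =>
    (hS k).exists_lipschitzWith_range_eq ((hSε k).trans_eq (coe_toNNReal hfin).symm)
  have hlim : Tendsto (fun k => hausdorffDist Γ (range (f k))) atTop (𝓝 0) :=
    squeeze_zero (fun _ => hausdorffDist_nonneg) (fun k => (hfS k ▸ hSΓ k).le)
      tendsto_one_div_add_atTop_nhds_zero_nat
  have hle := hausdorffMeasure_le_of_tendsto_hausdorffDist hΓ.isCompact.isBounded hf hlim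
  rw [coe_toNNReal hfin] at hle
  exact (hle.trans_lt hlt).false
end

section
/- Let Γ ⊆ ℝⁿ be a simple rectifiable curve with endpoints p₀, p₁, and for ε > 0 define L(Γ, ε) = inf{ H¹(Γ') : Γ' is a simple rectifiable curve, Γ' ⊆ Γ(ε), p₀, p₁ ∈ Γ' }, where Γ(ε) is the closed ε-neighborhood of Γ. Then lim_{ε → 0⁺} L(Γ, ε) = H¹(Γ). -/
/-!
The upper bound holds because `Γ` itself is a competitor. For the lower bound, take a partition
`u₀ ≤ ⋯ ≤ u_N` whose chord sum nearly reaches `H¹(Γ)`, which is at most the variation of `γ`.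
As `γ` is a homeomorphism onto its image, for small `ε` the `ε`-neighbourhoods of the arcs
`γ[0,t]` and `γ[t,1]` meet only near `γ t`, uniformly in `t`. A competing arc `g` from `γ 0` to
`γ 1` inside `Γ(ε)` must pass from the first neighbourhood into the second; its last exit time
`σ t` from the first one is monotone in `t`, so the points `g (σ uᵢ)` are ordered along `g` and
lie near `γ uᵢ`. Hence their chord sum, and with it `H¹` of the competitor, nearly reaches
`H¹(Γ)`.
-/

open Set Metric Filter MeasureTheory ENNReal

theorem HasUnitSpeedOn.lipschitzOnWith {E : Type*} [PseudoEMetricSpace E] {f : ℝ → E}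
    {s : Set ℝ} (hf : HasUnitSpeedOn f s) : LipschitzOnWith 1 f s := by
  have key : ∀ x ∈ s, ∀ y ∈ s, x ≤ y → edist (f x) (f y) ≤ edist x y := fun x hx y hy hxy =>
    calc edist (f x) (f y) ≤ eVariationOn f (s ∩ Icc x y) :=
          eVariationOn.edist_le f ⟨hx, le_rfl, hxy⟩ ⟨hy, hxy, le_rfl⟩
      _ = edist x y := by
          rw [hf hx hy, NNReal.coe_one, one_mul, edist_dist, Real.dist_eq, abs_sub_comm,
            abs_of_nonneg (by linarith)]
  intro x hx y hy
  rw [ENNReal.coe_one, one_mul]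
  rcases le_total x y with hxy | hyx
  · exact key x hx y hy hxy
  · rw [edist_comm, edist_comm x]
    exact key y hy x hx hyx

section

variable {X : Type*} [MetricSpace X]

theorem IsCompact.exists_pos_forall_dist_lt_of_injOn {α : Type*} [PseudoMetricSpace α]
    {K : Set α} (hK : IsCompact K) {f : α → X} (hf : ContinuousOn f K) (hfi : InjOn f K)
    {δ : ℝ} (hδ : 0 < δ) :
    ∃ m > 0, ∀ u ∈ K, ∀ v ∈ K, dist (f u) (f v) < m → dist u v < δ := by
  set P := {w ∈ K ×ˢ K | δ ≤ dist w.1 w.2}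
  have hP : IsCompact P := (hK.prod hK).inter_right (isClosed_le continuous_const continuous_dist)
  have hfP : ContinuousOn (fun w : α × α => dist (f w.1) (f w.2)) P :=
    continuous_dist.comp_continuousOn <|
      (hf.comp continuousOn_fst fun w hw => hw.1.1).prodMk
        (hf.comp continuousOn_snd fun w hw => hw.1.2)
  have hpos : ∀ w ∈ P, 0 < dist (f w.1) (f w.2) := fun w hw => dist_pos.2 fun h => by
    have hw₂ := hw.2
    rw [hfi hw.1.1 hw.1.2 h, dist_self] at hw₂
    linarith
  obtain ⟨m, hm, hmP⟩ := hP.exists_forall_le' hfP hpos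
  exact ⟨m, hm, fun u hu v hv huv => not_le.1 fun h => (hmP (u, v) ⟨⟨hu, hv⟩, h⟩).not_gt huv⟩

theorem exists_pos_cthickening_inter_subset_closedBall {γ : ℝ → X} {a b : ℝ}
    (hc : ContinuousOn γ (Icc a b)) (hi : InjOn γ (Icc a b)) {r : ℝ} (hr : 0 < r) :
    ∃ e > 0, ∀ t ∈ Icc a b,
      cthickening e (γ '' Icc a t) ∩ cthickening e (γ '' Icc t b) ⊆ closedBall (γ t) r := by
  obtain ⟨δ, hδ, hγδ⟩ := Metric.uniformContinuousOn_iff.1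
    (isCompact_Icc.uniformContinuousOn_of_continuous hc) (r / 2) (half_pos hr)
  obtain ⟨m, hm, hmδ⟩ := isCompact_Icc.exists_pos_forall_dist_lt_of_injOn hc hi hδ
  set e := min (m / 3) (r / 2)
  have he : 0 < e := by positivity
  refine ⟨e, he, fun t ht y ⟨hy₁, hy₂⟩ => ?_⟩
  have hsub₁ : Icc a t ⊆ Icc a b := Icc_subset_Icc_right ht.2
  have hsub₂ : Icc t b ⊆ Icc a b := Icc_subset_Icc_left ht.1
  rw [(isCompact_Icc.image_of_continuousOn (hc.mono hsub₁)).cthickening_eq_biUnion_closedBall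
    he.le] at hy₁
  rw [(isCompact_Icc.image_of_continuousOn (hc.mono hsub₂)).cthickening_eq_biUnion_closedBall
    he.le] at hy₂
  obtain ⟨_, ⟨t₁, ht₁, rfl⟩, hy₁⟩ := mem_iUnion₂.1 hy₁
  obtain ⟨_, ⟨t₂, ht₂, rfl⟩, hy₂⟩ := mem_iUnion₂.1 hy₂
  rw [mem_closedBall] at hy₁ hy₂ ⊢
  have he₁ : e ≤ m / 3 := min_le_left _ _
  have he₂ : e ≤ r / 2 := min_le_right _ _
  have h₁₂ : dist t₁ t₂ < δ :=
    hmδ t₁ (hsub₁ ht₁) t₂ (hsub₂ ht₂) ((dist_triangle_left _ _ y).trans_lt (by linarith))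
  have h₁ : dist t₁ t < δ := by
    rw [Real.dist_eq, abs_of_nonpos (by linarith [ht₁.2])]
    rw [Real.dist_eq, abs_of_nonpos (by linarith [ht₁.2, ht₂.1])] at h₁₂
    linarith [ht₂.1]
  have := hγδ t₁ (hsub₁ ht₁) t ht h₁
  linarith [dist_triangle y (γ t₁) (γ t)]

theorem exists_monotoneOn_mem_cthickening_inter {γ g : ℝ → X} {a b p q ε : ℝ} (hpq : p ≤ q)
    (hg : ContinuousOn g (Icc p q)) (hgp : g p = γ a) (hgq : g q = γ b)
    (hsub : g '' Icc p q ⊆ cthickening ε (γ '' Icc a b)) :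
    ∃ σ : ℝ → ℝ, MonotoneOn σ (Icc a b) ∧ ∀ t ∈ Icc a b, σ t ∈ Icc p q ∧
      g (σ t) ∈ cthickening ε (γ '' Icc a t) ∩ cthickening ε (γ '' Icc t b) := by
  set S : ℝ → Set ℝ := fun t => {s ∈ Icc p q | g s ∈ cthickening ε (γ '' Icc a t)}
  have hbdd : ∀ t, BddAbove (S t) := fun t => ⟨q, fun s hs => hs.1.2⟩
  have hp : ∀ t ∈ Icc a b, p ∈ S t := fun t ht =>
    ⟨left_mem_Icc.2 hpq,
      hgp ▸ self_subset_cthickening _ (mem_image_of_mem γ (left_mem_Icc.2 ht.1))⟩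
  have hS : Monotone S := fun t t' htt' s hs =>
    ⟨hs.1, cthickening_subset_of_subset ε (image_mono (Icc_subset_Icc_right htt')) hs.2⟩
  refine ⟨fun t => sSup (S t), fun t ht t' _ htt' => csSup_le_csSup (hbdd t') ⟨p, hp t ht⟩
    (hS htt'), fun t ht => ?_⟩
  have hmem : sSup (S t) ∈ S t :=
    (hg.preimage_isClosed_of_isClosed isClosed_Icc isClosed_cthickening).csSup_mem
      ⟨p, hp t ht⟩ (hbdd t)
  refine ⟨hmem.1, hmem.2, ?_⟩
  dsimp only
  -- after its last visit to the first thickening, `g` stays in the second one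
  have hafter : g '' Ioc (sSup (S t)) q ⊆ cthickening ε (γ '' Icc t b) := by
    rintro _ ⟨s, hs, rfl⟩
    have hs' : s ∈ Icc p q := ⟨hmem.1.1.trans hs.1.le, hs.2⟩
    have := hsub (mem_image_of_mem g hs')
    rw [← Icc_union_Icc_eq_Icc ht.1 ht.2, image_union, cthickening_union] at this
    exact this.resolve_left fun h => notMem_of_csSup_lt hs.1 (hbdd t) ⟨hs', h⟩
  rcases hmem.1.2.eq_or_lt with heq | hlt
  · rw [heq, hgq]
    exact self_subset_cthickening _ (mem_image_of_mem γ (right_mem_Icc.2 ht.2))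
  · have hcont : ContinuousWithinAt g (Ioc (sSup (S t)) q) (sSup (S t)) :=
      (hg _ hmem.1).mono fun s hs => ⟨hmem.1.1.trans hs.1.le, hs.2⟩
    have hcl : sSup (S t) ∈ closure (Ioc (sSup (S t)) q) := by
      rw [closure_Ioc hlt.ne]
      exact left_mem_Icc.2 hlt.le
    exact isClosed_cthickening.closure_subset_iff.2 hafter (hcont.mem_closure_image hcl)

theorem exists_arc_of_mem_image {g : ℝ → X} {a b : ℝ} (hc : ContinuousOn g (Icc a b))
    (hi : InjOn g (Icc a b)) {x y : X} (hx : x ∈ g '' Icc a b) (hy : y ∈ g '' Icc a b) :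
    ∃ (g' : ℝ → X) (p q : ℝ), p ≤ q ∧ ContinuousOn g' (Icc p q) ∧ InjOn g' (Icc p q) ∧
      g' '' Icc p q ⊆ g '' Icc a b ∧ g' p = x ∧ g' q = y := by
  obtain ⟨u, hu, rfl⟩ := hx
  obtain ⟨v, hv, rfl⟩ := hy
  rcases le_total u v with huv | hvu
  · have hsub : Icc u v ⊆ Icc a b := Icc_subset_Icc hu.1 hv.2
    exact ⟨g, u, v, huv, hc.mono hsub, hi.mono hsub, image_mono hsub, rfl, rfl⟩
  · have hmaps : MapsTo Neg.neg (Icc (-u) (-v)) (Icc a b) := fun s hs =>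
      ⟨by linarith [hs.2, hv.1], by linarith [hs.1, hu.2]⟩
    refine ⟨g ∘ Neg.neg, -u, -v, neg_le_neg hvu, hc.comp continuous_neg.continuousOn hmaps,
      hi.comp neg_injective.injOn hmaps, ?_, by simp, by simp⟩
    rw [image_comp]
    exact image_mono (image_subset_iff.2 hmaps)

theorem sum_edist_le_sum_edist_add {Y : Type*} [PseudoMetricSpace Y] {x y : ℕ → Y} {r : ℝ}
    (h : ∀ i, dist (x i) (y i) ≤ r) (N : ℕ) :
    ∑ i ∈ Finset.range N, edist (x (i + 1)) (x i) ≤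
      ∑ i ∈ Finset.range N, edist (y (i + 1)) (y i) + N * (2 * ENNReal.ofReal r) := by
  have h' : ∀ i, edist (x i) (y i) ≤ ENNReal.ofReal r := fun i => by
    rw [edist_dist]
    exact ENNReal.ofReal_le_ofReal (h i)
  calc ∑ i ∈ Finset.range N, edist (x (i + 1)) (x i)
      ≤ ∑ i ∈ Finset.range N, (edist (y (i + 1)) (y i) + 2 * ENNReal.ofReal r) := by
        refine Finset.sum_le_sum fun i _ => ?_
        calc edist (x (i + 1)) (x i)
            ≤ edist (x (i + 1)) (y (i + 1)) + edist (y (i + 1)) (y i) + edist (y i) (x i) :=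
              edist_triangle4 _ _ _ _
          _ ≤ ENNReal.ofReal r + edist (y (i + 1)) (y i) + ENNReal.ofReal r := by
              gcongr
              · exact h' _
              · exact edist_comm (y i) (x i) ▸ h' i
          _ = edist (y (i + 1)) (y i) + 2 * ENNReal.ofReal r := by ring
    _ = ∑ i ∈ Finset.range N, edist (y (i + 1)) (y i) + N * (2 * ENNReal.ofReal r) := by
        rw [Finset.sum_add_distrib, Finset.sum_const, Finset.card_range, nsmul_eq_mul]

variable [MeasurableSpace X] [BorelSpace X]

theorem IsPreconnected.edist_le_hausdorffMeasure {K : Set X} (hK : IsPreconnected K)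
    {x y : X} (hx : x ∈ K) (hy : y ∈ K) : edist x y ≤ μH[1] K := by
  have hlip : LipschitzWith 1 (dist x ·) := LipschitzWith.dist_right x
  have hIcc : Icc 0 (dist x y) ⊆ (dist x ·) '' K :=
    (hK.image _ hlip.continuous.continuousOn).Icc_subset ⟨x, hx, dist_self x⟩ ⟨y, hy, rfl⟩
  calc edist x y = μH[1] (Icc 0 (dist x y)) := by
        rw [hausdorffMeasure_real, Real.volume_Icc, sub_zero, edist_dist]
    _ ≤ μH[1] ((dist x ·) '' K) := measure_mono hIcc
    _ ≤ μH[1] K := by simpa using hlip.hausdorffMeasure_image_le zero_le_one K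

theorem edist_le_hausdorffMeasure_image_Ico {γ : ℝ → X} {a b : ℝ} (hab : a ≤ b)
    (hc : ContinuousOn γ (Icc a b)) : edist (γ a) (γ b) ≤ μH[1] (γ '' Ico a b) := by
  have := Measure.nullSingletonClass_hausdorff X one_pos
  calc edist (γ a) (γ b) ≤ μH[1] (γ '' Icc a b) :=
        (isPreconnected_Icc.image γ hc).edist_le_hausdorffMeasure
          (mem_image_of_mem γ (left_mem_Icc.2 hab)) (mem_image_of_mem γ (right_mem_Icc.2 hab))
    _ = μH[1] (γ '' Ico a b) := by
        rw [← Ico_insert_right hab, image_insert_eq, measure_congr (insert_ae_eq_self _ _)]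

theorem sum_edist_le_hausdorffMeasure_image {γ : ℝ → X} {a b : ℝ}
    (hc : ContinuousOn γ (Icc a b)) (hi : InjOn γ (Icc a b)) {u : ℕ → ℝ} (hu : Monotone u)
    (hmem : ∀ i, u i ∈ Icc a b) (N : ℕ) :
    ∑ i ∈ Finset.range N, edist (γ (u (i + 1))) (γ (u i)) ≤ μH[1] (γ '' Icc a b) := by
  have hsub : ∀ i, Ico (u i) (u (i + 1)) ⊆ Icc a b := fun i =>
    Ico_subset_Icc_self.trans (Icc_subset_Icc (hmem i).1 (hmem (i + 1)).2)
  calc ∑ i ∈ Finset.range N, edist (γ (u (i + 1))) (γ (u i))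
      ≤ ∑ i ∈ Finset.range N, μH[1] (γ '' Ico (u i) (u (i + 1))) := by
        refine Finset.sum_le_sum fun i _ => ?_
        rw [edist_comm]
        exact edist_le_hausdorffMeasure_image_Ico (hu i.le_succ)
          (hc.mono (Icc_subset_Icc (hmem i).1 (hmem (i + 1)).2))
    _ = μH[1] (⋃ i ∈ Finset.range N, γ '' Ico (u i) (u (i + 1))) := by
        refine (measure_biUnion_finset (fun i _ j _ hij => ?_) fun i _ => ?_).symm
        · have hd : Disjoint (Ico (u i) (u (i + 1))) (Ico (u j) (u (j + 1))) :=
            hu.pairwise_disjoint_on_Ico_succ hij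
          rw [Function.onFun, disjoint_iff_inter_eq_empty, ← hi.image_inter (hsub i) (hsub j),
            hd.inter_eq, image_empty]
        · exact measurableSet_Ico.image_of_continuousOn_injOn (hc.mono (hsub i))
            (hi.mono (hsub i))
    _ ≤ μH[1] (γ '' Icc a b) :=
        measure_mono (iUnion₂_subset fun i _ => image_mono (hsub i))

theorem hausdorffMeasure_image_Icc_le_eVariationOn (γ : ℝ → X) (a b : ℝ) :
    μH[1] (γ '' Icc a b) ≤ eVariationOn γ (Icc a b) := by
  rcases lt_or_ge b a with hba | hab
  · simp [Icc_eq_empty_of_lt hba]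
  by_cases hbv : BoundedVariationOn γ (Icc a b)
  swap
  · rw [BoundedVariationOn, not_ne_iff] at hbv
    exact hbv ▸ le_top
  have ha : a ∈ Icc a b := left_mem_Icc.2 hab
  set φ := variationOnFromTo γ (Icc a b) a
  set F := naturalParameterization γ (Icc a b) a
  have hlbv := hbv.locallyBoundedVariationOn
  have hφ : MonotoneOn φ (Icc a b) := variationOnFromTo.monotoneOn hlbv ha
  have himg : γ '' Icc a b = F '' (φ '' Icc a b) := by
    rw [← image_comp]
    exact image_congr fun t ht =>
      (edist_eq_zero.1 (edist_naturalParameterization_eq_zero hlbv ha ht)).symm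
  calc μH[1] (γ '' Icc a b) ≤ μH[1] (φ '' Icc a b) := by
        have hF := (has_unit_speed_naturalParameterization γ hlbv ha).lipschitzOnWith
        simpa [himg] using hF.hausdorffMeasure_image_le zero_le_one
    _ ≤ μH[1] (Icc (φ a) (φ b)) :=
        measure_mono <| image_subset_iff.2 fun t ht =>
          ⟨hφ ha ht ht.1, hφ ht (right_mem_Icc.2 hab) ht.2⟩
    _ = ENNReal.ofReal (eVariationOn γ (Icc a b)).toReal := by
        simp only [φ]
        rw [hausdorffMeasure_real, Real.volume_Icc, variationOnFromTo.self, sub_zero,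
          variationOnFromTo.eq_of_le γ _ hab, inter_self]
    _ ≤ eVariationOn γ (Icc a b) := ENNReal.ofReal_toReal_le

theorem exists_pos_forall_lt_hausdorffMeasure {γ : ℝ → X} {a b : ℝ}
    (hc : ContinuousOn γ (Icc a b)) (hi : InjOn γ (Icc a b)) {c : ℝ≥0∞}
    (hlt : c < μH[1] (γ '' Icc a b)) :
    ∃ e > 0, ∀ ε ≤ e, ∀ (g : ℝ → X) (p q : ℝ), p ≤ q → ContinuousOn g (Icc p q) →
      InjOn g (Icc p q) → g '' Icc p q ⊆ cthickening ε (γ '' Icc a b) → g p = γ a →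
      g q = γ b → c < μH[1] (g '' Icc p q) := by
  obtain ⟨c', hcc', hc'⟩ := exists_between hlt
  obtain ⟨⟨N, u, hu, humem⟩, hsum⟩ :=
    lt_iSup_iff.1 (hc'.trans_le (hausdorffMeasure_image_Icc_le_eVariationOn γ a b))
  obtain ⟨r, hrc, hr⟩ : ∃ r : ℝ, c + N * (2 * ENNReal.ofReal r) < c' ∧ 0 < r := by
    have hcont : Continuous fun r : ℝ => c + N * (2 * ENNReal.ofReal r) :=
      continuous_const.add <| (ENNReal.continuous_const_mul (by simp)).comp <|
        (ENNReal.continuous_const_mul (by simp)).comp ENNReal.continuous_ofReal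
    have hlim := (hcont.tendsto' 0 c (by simp)).mono_left (nhdsWithin_le_nhds (s := Ioi 0))
    exact ((hlim.eventually (gt_mem_nhds hcc')).and self_mem_nhdsWithin).exists
  obtain ⟨e, he, hpinch⟩ := exists_pos_cthickening_inter_subset_closedBall hc hi hr
  refine ⟨e, he, fun ε hε g p q hpq hg hgi hsub hgp hgq => ?_⟩
  obtain ⟨σ, hσ, hσmem⟩ := exists_monotoneOn_mem_cthickening_inter hpq hg hgp hgq hsub
  have hclose : ∀ i, dist (γ (u i)) (g (σ (u i))) ≤ r := fun i => by
    rw [dist_comm, ← mem_closedBall]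
    exact hpinch (u i) (humem i) <| inter_subset_inter (cthickening_mono hε _)
      (cthickening_mono hε _) (hσmem (u i) (humem i)).2
  have hchord := sum_edist_le_hausdorffMeasure_image hg hgi
    (fun i j hij => hσ (humem i) (humem j) (hu hij)) (fun i => (hσmem _ (humem i)).1) N
  rw [← ENNReal.add_lt_add_iff_right (a := N * (2 * ENNReal.ofReal r)) (by finiteness)]
  calc c + N * (2 * ENNReal.ofReal r) < c' := hrc
    _ < ∑ i ∈ Finset.range N, edist (γ (u (i + 1))) (γ (u i)) := hsum
    _ ≤ ∑ i ∈ Finset.range N, edist (g (σ (u (i + 1)))) (g (σ (u i)))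
          + N * (2 * ENNReal.ofReal r) := sum_edist_le_sum_edist_add hclose N
    _ ≤ μH[1] (g '' Icc p q) + N * (2 * ENNReal.ofReal r) := by gcongr

end

theorem length_of_sausage_approx {n : ℕ}
    (γ : ℝ → EuclideanSpace ℝ (Fin n))
    (hc : ContinuousOn γ (Icc 0 1)) (hi : InjOn γ (Icc 0 1))
    (Γ : Set (EuclideanSpace ℝ (Fin n))) (hΓ : Γ = γ '' Icc 0 1)
    (hrect : μH[1] Γ < ⊤) :
    Tendsto
      (fun ε : ℝ =>
        sInf { L : ℝ≥0∞ | ∃ Γ' : Set (EuclideanSpace ℝ (Fin n)),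
          IsSimpleRectifiableCurve Γ' ∧ Γ' ⊆ cthickening ε Γ ∧
          γ 0 ∈ Γ' ∧ γ 1 ∈ Γ' ∧ L = μH[1] Γ' })
      (nhdsWithin 0 (Ioi 0)) (nhds (μH[1] Γ)) := by
  subst hΓ
  refine tendsto_order.2 ⟨fun L hL => ?_, fun L hL => Eventually.of_forall fun ε => ?_⟩
  · obtain ⟨L', hLL', hL'⟩ := exists_between hL
    obtain ⟨e, he, hlow⟩ := exists_pos_forall_lt_hausdorffMeasure hc hi hL'
    filter_upwards [Ioc_mem_nhdsGT he] with ε hε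
    refine hLL'.trans_le (le_sInf ?_)
    rintro _ ⟨_, ⟨⟨g, hg, hgi, rfl⟩, -⟩, hsub, h0, h1, rfl⟩
    obtain ⟨g', p, q, hpq, hg', hgi', hsub', hp, hq⟩ := exists_arc_of_mem_image hg hgi h0 h1
    exact ((hlow ε hε.2 g' p q hpq hg' hgi' (hsub'.trans hsub) hp hq).trans_le
      (measure_mono hsub')).le
  · refine (sInf_le ?_).trans_lt hL
    exact ⟨_, ⟨⟨γ, hc, hi, rfl⟩, hrect⟩, self_subset_cthickening _,
      mem_image_of_mem γ (left_mem_Icc.2 zero_le_one),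
      mem_image_of_mem γ (right_mem_Icc.2 zero_le_one), rfl⟩
end

section
/- Let S be a finite set of points in ℝⁿ sampled from a connected set Γ with the property that 2·d_H(Γ, S) ≤ ε. If T is a Euclidean spanning tree of S containing an edge of length greater than 4ε, then T is not a minimum spanning tree: there exists another spanning tree of S with strictly smaller total edge length. -/
/-!
Delete the long edge `uv` from `T`; the two resulting components have vertex sets `A ∋ u` and
`B ∋ v` covering `S`. Every point of `Γ` lies within `ε / 2` of `A` or of `B`. Since `u` and `v`
lie within `ε` of `Γ`, either `A` and `B` are already within `3ε / 2` of each other or both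
alternatives occur, and then connectedness of `Γ` gives a point within `ε / 2` of both. Either
way there are `a ∈ A`, `b ∈ B` with `|a - b| ≤ 3ε / 2 < |u - v|`, and reconnecting the two
components by `ab` instead of `uv` yields a lighter spanning tree.
-/
open Set Metric MeasureTheory ENNReal Classical

/-- Total Euclidean edge length of a graph on points of `ℝⁿ`. -/
noncomputable def graphWeight {V : Type*} [Fintype V] {n : ℕ}
    (pos : V → EuclideanSpace ℝ (Fin n)) (T : SimpleGraph V) : ℝ :=
  (1 / 2) * ∑ u : V, ∑ v : V, if T.Adj u v then dist (pos u) (pos v) else 0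

/-- A spanning tree of the complete graph on the vertex set. -/
def IsSpanningTree {V : Type*} (T : SimpleGraph V) : Prop :=
  T.Connected ∧ T.IsAcyclic

section Geometry

variable {α : Type*} [PseudoMetricSpace α]

theorem subset_cthickening_of_hausdorffEDist_le {s t : Set α} {δ : ℝ}
    (h : hausdorffEDist s t ≤ ENNReal.ofReal δ) : s ⊆ cthickening δ t :=
  fun _ hx ↦ mem_cthickening_iff.2 ((infEDist_le_hausdorffEDist_of_mem hx).trans h)

theorem IsCompact.exists_dist_le_of_mem_cthickening {K : Set α} {δ : ℝ} {x : α}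
    (hK : IsCompact K) (hδ : 0 ≤ δ) (hx : x ∈ cthickening δ K) : ∃ k ∈ K, dist x k ≤ δ := by
  rw [hK.cthickening_eq_biUnion_closedBall hδ] at hx
  simpa using hx

theorem IsPreconnected.exists_dist_le_of_subset_cthickening_union {Γ A B : Set α} {δ ρ : ℝ}
    (hΓ : IsPreconnected Γ) (hA : IsCompact A) (hB : IsCompact B) (hδ : 0 ≤ δ) (hδρ : δ ≤ ρ)
    (hcover : Γ ⊆ cthickening δ (A ∪ B))
    (hΓA : ∃ a ∈ A, ∃ γ ∈ Γ, dist a γ ≤ ρ) (hΓB : ∃ b ∈ B, ∃ γ ∈ Γ, dist b γ ≤ ρ) :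
    ∃ a ∈ A, ∃ b ∈ B, dist a b ≤ δ + ρ := by
  by_contra! hfar
  rw [cthickening_union] at hcover
  have hmeetA : (Γ ∩ cthickening δ A).Nonempty := by
    obtain ⟨a, ha, γ, hγ, haγ⟩ := hΓA
    refine ⟨γ, hγ, (hcover hγ).resolve_right fun hγB ↦ ?_⟩
    obtain ⟨b, hb, hγb⟩ := hB.exists_dist_le_of_mem_cthickening hδ hγB
    linarith [hfar a ha b hb, dist_triangle a γ b]
  have hmeetB : (Γ ∩ cthickening δ B).Nonempty := by
    obtain ⟨b, hb, γ, hγ, hbγ⟩ := hΓB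
    refine ⟨γ, hγ, (hcover hγ).resolve_left fun hγA ↦ ?_⟩
    obtain ⟨a, ha, hγa⟩ := hA.exists_dist_le_of_mem_cthickening hδ hγA
    linarith [hfar a ha b hb, dist_triangle_left a b γ, dist_comm b γ]
  obtain ⟨γ, -, hγA, hγB⟩ := isPreconnected_closed_iff.1 hΓ _ _ isClosed_cthickening
    isClosed_cthickening hcover hmeetA hmeetB
  obtain ⟨a, ha, hγa⟩ := hA.exists_dist_le_of_mem_cthickening hδ hγA
  obtain ⟨b, hb, hγb⟩ := hB.exists_dist_le_of_mem_cthickening hδ hγB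
  linarith [hfar a ha b hb, dist_triangle_left a b γ]

end Geometry

namespace SimpleGraph

variable {V : Type*} {G H : SimpleGraph V} {u v w a b : V}

theorem deleteEdges_sup_edge_of_adj (h : G.Adj u v) : G.deleteEdges {s(u, v)} ⊔ edge u v = G := by
  ext x y
  simp only [sup_adj, deleteEdges_adj, Set.mem_singleton_iff, edge_adj, Sym2.eq_iff]
  grind [G.adj_symm, G.ne_of_adj]

theorem Reachable.reachable_or_reachable_of_sup_edge (h : (H ⊔ edge u v).Reachable u w) :
    H.Reachable u w ∨ H.Reachable v w := by
  rw [reachable_iff_reflTransGen] at h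
  induction h with
  | refl => exact .inl .rfl
  | tail _ hxy ih =>
    rcases hxy with hxy | hxy
    · exact ih.imp (·.trans hxy.reachable) (·.trans hxy.reachable)
    · rw [edge_adj] at hxy
      obtain ⟨⟨rfl, rfl⟩ | ⟨rfl, rfl⟩, -⟩ := hxy
      exacts [.inr .rfl, .inl .rfl]

theorem Connected.reachable_or_reachable_deleteEdges (hG : G.Connected) (huv : G.Adj u v)
    (w : V) : (G.deleteEdges {s(u, v)}).Reachable u w ∨ (G.deleteEdges {s(u, v)}).Reachable v w :=
  Reachable.reachable_or_reachable_of_sup_edge <| by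
    rw [deleteEdges_sup_edge_of_adj huv]; exact hG u w

theorem IsAcyclic.not_reachable_deleteEdges (hG : G.IsAcyclic) (huv : G.Adj u v)
    (ha : (G.deleteEdges {s(u, v)}).Reachable u a) (hb : (G.deleteEdges {s(u, v)}).Reachable v b) :
    ¬(G.deleteEdges {s(u, v)}).Reachable a b := fun hab ↦
  isAcyclic_iff_forall_adj_isBridge.1 hG huv ((ha.trans hab).trans hb.symm)

end SimpleGraph

open SimpleGraph

theorem IsSpanningTree.deleteEdges_sup_edge {V : Type*} {T : SimpleGraph V} {u v a b : V}
    (hT : IsSpanningTree T) (huv : T.Adj u v)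
    (ha : (T.deleteEdges {s(u, v)}).Reachable u a) (hb : (T.deleteEdges {s(u, v)}).Reachable v b) :
    IsSpanningTree (T.deleteEdges {s(u, v)} ⊔ edge a b) := by
  set H := T.deleteEdges {s(u, v)}
  have hsep := hT.2.not_reachable_deleteEdges huv ha hb
  have hle : H ≤ H ⊔ edge a b := le_sup_left
  have hab : (H ⊔ edge a b).Adj a b :=
    .inr ((edge_adj ..).2 ⟨.inl ⟨rfl, rfl⟩, by rintro rfl; exact hsep .rfl⟩)
  have hu : ∀ w, (H ⊔ edge a b).Reachable u w := fun w ↦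
    (hT.1.reachable_or_reachable_deleteEdges huv w).elim (·.mono hle) fun hvw ↦
      (((ha.mono hle).trans hab.reachable).trans (hb.mono hle).symm).trans (hvw.mono hle)
  exact ⟨(connected_iff_exists_forall_reachable _).2 ⟨u, hu⟩,
    (hT.2.anti (deleteEdges_le _)).sup_edge_of_not_reachable hsep⟩

section Weight

variable {V : Type*} [Fintype V] {n : ℕ} (pos : V → EuclideanSpace ℝ (Fin n))

theorem graphWeight_sup_of_disjoint {G H : SimpleGraph V} (h : Disjoint G H) :
    graphWeight pos (G ⊔ H) = graphWeight pos G + graphWeight pos H := by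
  simp only [graphWeight, ← mul_add, ← Finset.sum_add_distrib]
  congr! 3 with x - y -
  by_cases hG : G.Adj x y
  · simp [hG, SimpleGraph.disjoint_left.1 h x y hG]
  · simp [hG]

theorem graphWeight_edge {a b : V} (hab : a ≠ b) :
    graphWeight pos (edge a b) = dist (pos a) (pos b) := by
  calc graphWeight pos (edge a b)
      = (1 / 2) * ∑ x, ∑ y, ((if x = a ∧ y = b then dist (pos x) (pos y) else 0) +
          (if x = b ∧ y = a then dist (pos x) (pos y) else 0)) := by
        unfold graphWeight
        congr! 3 with x - y -
        split_ifs <;> grind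
    _ = (1 / 2) * (dist (pos a) (pos b) + dist (pos b) (pos a)) := by
        simp [Finset.sum_add_distrib, ite_and]
    _ = dist (pos a) (pos b) := by rw [dist_comm (pos b)]; ring

theorem graphWeight_sup_edge {G : SimpleGraph V} {a b : V} (hab : a ≠ b) (h : ¬G.Adj a b) :
    graphWeight pos (G ⊔ edge a b) = graphWeight pos G + dist (pos a) (pos b) := by
  rw [graphWeight_sup_of_disjoint pos ((disjoint_edge _).2 h), graphWeight_edge pos hab]

end Weight

theorem long_edge_not_mst_general {n : ℕ} (V : Type*) [Fintype V]
    (pos : V → EuclideanSpace ℝ (Fin n))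
    (Γ : Set (EuclideanSpace ℝ (Fin n))) (hΓconn : IsConnected Γ)
    (ε : ℝ) (hε : 0 < ε)
    (hclose : EMetric.hausdorffEdist Γ (Set.range pos) ≤ ENNReal.ofReal (ε / 2))
    (T : SimpleGraph V) (hT : IsSpanningTree T)
    (hedge : ∃ u v : V, T.Adj u v ∧ dist (pos u) (pos v) > 4 * ε) :
    ∃ T' : SimpleGraph V, IsSpanningTree T' ∧ graphWeight pos T' < graphWeight pos T := by
  obtain ⟨u, v, huv, hlong⟩ := hedge
  set H := T.deleteEdges {s(u, v)}
  set A := pos '' {w | H.Reachable u w}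
  set B := pos '' {w | H.Reachable v w}
  have hAB : range pos = A ∪ B := by
    rw [← image_univ, ← image_union]
    exact congrArg _ (eq_univ_of_forall (hT.1.reachable_or_reachable_deleteEdges huv)).symm
  have hΓS : Γ ⊆ cthickening (ε / 2) (A ∪ B) := hAB ▸ subset_cthickening_of_hausdorffEDist_le hclose
  have hSΓ : range pos ⊆ thickening ε Γ :=
    (subset_cthickening_of_hausdorffEDist_le (hausdorffEDist_comm.trans_le hclose)).trans
      (cthickening_subset_thickening' hε (by linarith) Γ)
  have hnear (w : V) : ∃ γ ∈ Γ, dist (pos w) γ ≤ ε := by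
    obtain ⟨γ, hγ, hw⟩ := mem_thickening_iff.1 (hSΓ (mem_range_self w))
    exact ⟨γ, hγ, hw.le⟩
  obtain ⟨-, ⟨a, ha, rfl⟩, -, ⟨b, hb, rfl⟩, hab⟩ :=
    hΓconn.isPreconnected.exists_dist_le_of_subset_cthickening_union
      ((toFinite _).isCompact) ((toFinite _).isCompact) (by linarith) (by linarith) hΓS
      ⟨_, mem_image_of_mem _ .rfl, hnear u⟩ ⟨_, mem_image_of_mem _ .rfl, hnear v⟩
  have hsep := hT.2.not_reachable_deleteEdges huv ha hb
  refine ⟨H ⊔ edge a b, hT.deleteEdges_sup_edge huv ha hb, ?_⟩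
  conv_rhs => rw [← deleteEdges_sup_edge_of_adj huv]
  rw [graphWeight_sup_edge pos (by rintro rfl; exact hsep .rfl) (fun h ↦ hsep h.reachable),
    graphWeight_sup_edge pos huv.ne (by simp)]
  linarith

theorem long_edge_not_mst {n : ℕ} (V : Type*) [Fintype V] [Nonempty V]
    (pos : V → EuclideanSpace ℝ (Fin n)) (hpos : Function.Injective pos)
    (Γ : Set (EuclideanSpace ℝ (Fin n))) (hΓconn : IsConnected Γ)
    (ε : ℝ) (hε : 0 < ε)
    (hclose : EMetric.hausdorffEdist Γ (Set.range pos) ≤ ENNReal.ofReal (ε / 2))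
    (T : SimpleGraph V) (hT : IsSpanningTree T)
    (hedge : ∃ u v : V, T.Adj u v ∧ dist (pos u) (pos v) > 4 * ε) :
    ∃ T' : SimpleGraph V, IsSpanningTree T' ∧ graphWeight pos T' < graphWeight pos T :=
  long_edge_not_mst_general V pos Γ hΓconn ε hε hclose T hT hedge
end
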